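/- For every finitely generated P-closed set Ω ⊆ 𝔽ⁿ, the pair (𝒫(Ω), ℐ_Ω) is a matroid, where 𝒫(Ω) is the collection of all subsets of Ω and ℐ_Ω is the collection of all P-independent subsets of Ω; moreover, the bases of this matroid (its maximal independent sets) are exactly the P-bases of Ω. -/

import Mathlib

/- Common setup: free multivariate skew polynomial rings over a division ring. -/

open Matrix Finsupp

/-- The underlying left `𝔽`-module of the free multivariate skew polynomial ring:
the free left `𝔽`-module with basis the free monoid on `n` symbols. -/
abbrev SkewPoly (𝔽 : Type*) [DivisionRing 𝔽] (n : ℕ) : Type _ := FreeMonoid (Fin n) →₀ 𝔽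

namespace SkewPoly

variable {𝔽 : Type*} [DivisionRing 𝔽] {n : ℕ}

/-- The variable `xᵢ` as a skew polynomial. -/
noncomputable def X (𝔽 : Type*) [DivisionRing 𝔽] {n : ℕ} (i : Fin n) : SkewPoly 𝔽 n :=
  Finsupp.single (FreeMonoid.of i) 1

/-- The constant `a` as a skew polynomial (coefficient on the empty word). -/
noncomputable def C {𝔽 : Type*} [DivisionRing 𝔽] (n : ℕ) (a : 𝔽) :
    SkewPoly 𝔽 n := Finsupp.single 1 a

/-- The degree of a skew polynomial: the maximal length of a word in its support
(`⊥` for the zero polynomial). -/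
noncomputable def deg (F : SkewPoly 𝔽 n) : WithBot ℕ :=
  F.support.sup fun m => ((FreeMonoid.length m : ℕ) : WithBot ℕ)

/-- A matrix morphism `σ : 𝔽 → Mₙ(𝔽)`: a unital ring homomorphism. -/
def IsMatrixMorphism (σ : 𝔽 → Matrix (Fin n) (Fin n) 𝔽) : Prop :=
  σ 1 = 1 ∧ (∀ a b : 𝔽, σ (a + b) = σ a + σ b) ∧ (∀ a b : 𝔽, σ (a * b) = σ a * σ b)

/-- A `σ`-vector derivation `δ : 𝔽 → 𝔽ⁿ`: additive with `δ(ab) = σ(a)δ(b) + δ(a)b`. -/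
def IsVectorDerivation (σ : 𝔽 → Matrix (Fin n) (Fin n) 𝔽) (δ : 𝔽 → Fin n → 𝔽) : Prop :=
  (∀ a b : 𝔽, δ (a + b) = δ a + δ b) ∧
    (∀ a b : 𝔽, δ (a * b) = σ a *ᵥ δ b + fun i => δ a i * b)

/-- A multiplication on the free module `SkewPoly 𝔽 n` making it a ring (with the
existing addition) whose identity is the empty word, which restricts to concatenation
on monomials, is additive on degrees of nonzero elements, and for which left
multiplication by constants is scalar multiplication. -/
structure RawMul (𝔽 : Type*) [DivisionRing 𝔽] (n : ℕ) where
  /-- the multiplication -/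
  mul : SkewPoly 𝔽 n → SkewPoly 𝔽 n → SkewPoly 𝔽 n
  mul_add : ∀ F G H : SkewPoly 𝔽 n, mul F (G + H) = mul F G + mul F H
  add_mul : ∀ F G H : SkewPoly 𝔽 n, mul (F + G) H = mul F H + mul G H
  mul_assoc : ∀ F G H : SkewPoly 𝔽 n, mul (mul F G) H = mul F (mul G H)
  one_mul : ∀ F : SkewPoly 𝔽 n, mul (C n 1) F = F
  mul_one : ∀ F : SkewPoly 𝔽 n, mul F (C n 1) = F
  mono_mul_mono : ∀ m m' : FreeMonoid (Fin n),
    mul (Finsupp.single m 1) (Finsupp.single m' 1) = Finsupp.single (m * m') 1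
  const_mul : ∀ (a : 𝔽) (F : SkewPoly 𝔽 n), mul (C n a) F = a • F
  deg_mul : ∀ F G : SkewPoly 𝔽 n, F ≠ 0 → G ≠ 0 → deg (mul F G) = deg F + deg G

/-- The multiplication `S` satisfies the commutation rule
`xᵢ a = Σⱼ σ_{i,j}(a) xⱼ + δᵢ(a)`. -/
def HasCommRule (S : RawMul 𝔽 n) (σ : 𝔽 → Matrix (Fin n) (Fin n) 𝔽)
    (δ : 𝔽 → Fin n → 𝔽) : Prop :=
  ∀ (i : Fin n) (a : 𝔽),
    S.mul (X 𝔽 i) (C n a) =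
      (∑ j : Fin n, Finsupp.single (FreeMonoid.of j) (σ a i j)) + C n (δ a i)

/-- `F = Σᵢ Gᵢ (xᵢ - aᵢ) + b`, i.e. `b` is a remainder of `F` upon right division
by `x₁ - a₁, …, xₙ - aₙ`; equivalently `F - b` lies in the left ideal generated by
the `xᵢ - aᵢ`. -/
def Decomposes (S : RawMul 𝔽 n) (a : Fin n → 𝔽) (F : SkewPoly 𝔽 n) (b : 𝔽) : Prop :=
  ∃ G : Fin n → SkewPoly 𝔽 n,
    F = (∑ i : Fin n, S.mul (G i) (X 𝔽 i - C n (a i))) + C n b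

/-- The evaluation of `F` at the point `a`: the unique `b ∈ 𝔽` such that `F - b`
lies in the left ideal generated by `x₁ - a₁, …, xₙ - aₙ`. -/
noncomputable def eval (S : RawMul 𝔽 n) (a : Fin n → 𝔽) (F : SkewPoly 𝔽 n) : 𝔽 :=
  letI := Classical.propDecidable (∃ b : 𝔽, Decomposes S a F b)
  if h : ∃ b : 𝔽, Decomposes S a F b then h.choose else 0

/-- The `(σ,δ)`-conjugate `a^c = σ(c) a c⁻¹ + δ(c) c⁻¹` of `a` with respect to `c`. -/
noncomputable def conj (σ : 𝔽 → Matrix (Fin n) (Fin n) 𝔽) (δ : 𝔽 → Fin n → 𝔽)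
    (a : Fin n → 𝔽) (c : 𝔽) : Fin n → 𝔽 :=
  fun i => (σ c *ᵥ a) i * c⁻¹ + δ c i * c⁻¹

/-- `I(Ω)`: the set of skew polynomials vanishing at every point of `Ω`. -/
def zeroIdeal (S : RawMul 𝔽 n) (Ω : Set (Fin n → 𝔽)) : Set (SkewPoly 𝔽 n) :=
  {F | ∀ a ∈ Ω, eval S a F = 0}

/-- The left ideal of `SkewPoly 𝔽 n` generated by `x₁ - a₁, …, xₙ - aₙ`
(the set of sums of left multiples of the generators). -/
def pointIdeal (S : RawMul 𝔽 n) (a : Fin n → 𝔽) : Set (SkewPoly 𝔽 n) :=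
  {F | ∃ G : Fin n → SkewPoly 𝔽 n, F = ∑ i : Fin n, S.mul (G i) (X 𝔽 i - C n (a i))}

/-- The P-closure `Ω̄ = Z(I(Ω))` of a set of points `Ω`. -/
def pClosure (S : RawMul 𝔽 n) (Ω : Set (Fin n → 𝔽)) : Set (Fin n → 𝔽) :=
  {a | ∀ F ∈ zeroIdeal S Ω, eval S a F = 0}

/-- `Ω` is P-closed if it equals its P-closure. -/
def IsPClosed (S : RawMul 𝔽 n) (Ω : Set (Fin n → 𝔽)) : Prop := pClosure S Ω = Ω

/-- `B` is P-independent: no point of `B` lies in the P-closure of the rest. -/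
def PIndep (S : RawMul 𝔽 n) (B : Set (Fin n → 𝔽)) : Prop :=
  ∀ a ∈ B, a ∉ pClosure S (B \ {a})

/-- `B` is a P-basis of `Ω`: a P-independent subset of `Ω` whose P-closure is `Ω`. -/
def IsPBasis (S : RawMul 𝔽 n) (B Ω : Set (Fin n → 𝔽)) : Prop :=
  B ⊆ Ω ∧ PIndep S B ∧ pClosure S B = Ω

/-- `Ω` is finitely generated: it is the P-closure of a finite subset of itself. -/
def FinGen (S : RawMul 𝔽 n) (Ω : Set (Fin n → 𝔽)) : Prop :=
  ∃ G : Set (Fin n → 𝔽), G.Finite ∧ G ⊆ Ω ∧ pClosure S G = Ω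

/-- The rank of a P-closed set: the (common) cardinality of its P-bases. -/
noncomputable def pRank (S : RawMul 𝔽 n) (Ω : Set (Fin n → 𝔽)) : ℕ :=
  sInf {k : ℕ | ∃ B : Finset (Fin n → 𝔽), IsPBasis S ↑B Ω ∧ B.card = k}

/-- The image of the evaluation map `E_Ω : R → 𝔽^Ω`, as a left `𝔽`-subspace of `𝔽^Ω`
(the span of the image; the image is itself a subspace since evaluation is left linear). -/
noncomputable def evalSpan (S : RawMul 𝔽 n) (Ω : Set (Fin n → 𝔽)) :
    Submodule 𝔽 (↥Ω → 𝔽) :=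
  Submodule.span 𝔽 (Set.range fun F : SkewPoly 𝔽 n => fun a : ↥Ω => eval S ↑a F)

/-- `I` is a two-sided ideal with respect to the multiplication `S`. -/
def IsTwoSidedIdealSet (S : RawMul 𝔽 n) (I : Set (SkewPoly 𝔽 n)) : Prop :=
  (0 : SkewPoly 𝔽 n) ∈ I ∧ (∀ F ∈ I, ∀ G ∈ I, F + G ∈ I) ∧ (∀ F ∈ I, -F ∈ I) ∧
    (∀ F ∈ I, ∀ G : SkewPoly 𝔽 n, S.mul G F ∈ I) ∧
    (∀ F ∈ I, ∀ G : SkewPoly 𝔽 n, S.mul F G ∈ I)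


/-- The left row-rank of the skew Vandermonde matrix `V_d(G)`: the dimension of the
left `𝔽`-span of its rows `(N_m(c))_{c ∈ G}`, indexed by the words `m` of length `< d`,
where `N_m(c)` is the evaluation of the monomial `m` at the point `c`. -/
noncomputable def vandermondeRank (S : RawMul 𝔽 n) (G : Finset (Fin n → 𝔽)) (d : ℕ) :
    Cardinal :=
  Module.rank 𝔽 ↥(Submodule.span 𝔽 (Set.range
    fun m : {m : FreeMonoid (Fin n) // FreeMonoid.length m < d} =>
      fun c : ↥G => eval S ↑c (Finsupp.single (m : FreeMonoid (Fin n)) (1 : 𝔽))))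

end SkewPoly

open SkewPoly

/-!
Evaluation at a point `a` is a left `𝔽`-linear functional on `R`: the remainder modulo the left
ideal `Σ R (xᵢ - aᵢ)` exists by the commutation rule and is unique by comparing coefficients of a
longest word. Consequently, if `B ⊆ closure A` then every polynomial vanishing on `A` vanishes on
`B`, so evaluation on `B` factors through evaluation on `A`. For P-independent finite `B`,
evaluation `R → 𝔽^B` is onto (each point has a "Lagrange polynomial"), which yields the Steinitz
bound `|B| ≤ |A|`. Together with the exchange property of the P-closure this gives finiteness of
independent sets inside `Ω`, augmentation, and the description of maximal independent sets.
-/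

open Module LinearMap

theorem LinearMap.finrank_le_finrank_of_ker_le_ker {K M V W : Type*} [DivisionRing K]
    [AddCommGroup M] [Module K M] [AddCommGroup V] [Module K V] [AddCommGroup W] [Module K W]
    [FiniteDimensional K V] (f : M →ₗ[K] V) (g : M →ₗ[K] W) (hg : range g = ⊤)
    (h : ker f ≤ ker g) : finrank K W ≤ finrank K V := by
  obtain ⟨s, hs⟩ := g.exists_rightInverse_of_surjective hg
  refine LinearMap.finrank_le_finrank_of_injective (f := f ∘ₗ s) fun w w' hw => ?_
  have hker : s w - s w' ∈ ker f := by simpa [sub_eq_zero] using hw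
  simpa [sub_eq_zero, ← LinearMap.comp_apply, hs] using h hker

namespace SkewPoly

variable {𝔽 : Type*} [DivisionRing 𝔽] {n : ℕ}

theorem length_le_deg {F : SkewPoly 𝔽 n} {m : FreeMonoid (Fin n)} (hm : m ∈ F.support) :
    (m.length : WithBot ℕ) ≤ deg F :=
  Finset.le_sup (f := fun m => (m.length : WithBot ℕ)) hm

theorem apply_eq_zero_of_deg_lt {F : SkewPoly 𝔽 n} {w : FreeMonoid (Fin n)}
    (h : deg F < w.length) : F w = 0 :=
  Finsupp.notMem_support_iff.1 fun hw => (length_le_deg hw).not_gt h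

theorem deg_C_le (c : 𝔽) : deg (C n c) ≤ 0 :=
  Finset.sup_le fun m hm => by
    rw [Finset.mem_singleton.1 (Finsupp.support_single_subset hm)]
    rfl

namespace RawMul

variable (S : RawMul 𝔽 n)

theorem zero_mul (F : SkewPoly 𝔽 n) : S.mul 0 F = 0 := by
  simpa using S.add_mul 0 0 F

theorem mul_zero (F : SkewPoly 𝔽 n) : S.mul F 0 = 0 := by
  simpa using S.mul_add F 0 0

theorem neg_mul (F G : SkewPoly 𝔽 n) : S.mul (-F) G = -S.mul F G :=
  eq_neg_of_add_eq_zero_left (by rw [← S.add_mul, neg_add_cancel, S.zero_mul])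

theorem mul_neg (F G : SkewPoly 𝔽 n) : S.mul F (-G) = -S.mul F G :=
  eq_neg_of_add_eq_zero_left (by rw [← S.mul_add, neg_add_cancel, S.mul_zero])

theorem mul_sub (F G G' : SkewPoly 𝔽 n) : S.mul F (G - G') = S.mul F G - S.mul F G' := by
  rw [sub_eq_add_neg, S.mul_add, S.mul_neg, ← sub_eq_add_neg]

theorem mul_sum {ι : Type*} (s : Finset ι) (F : SkewPoly 𝔽 n) (G : ι → SkewPoly 𝔽 n) :
    S.mul F (∑ i ∈ s, G i) = ∑ i ∈ s, S.mul F (G i) :=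
  map_sum (AddMonoidHom.mk' (S.mul F) (S.mul_add F)) G s

theorem smul_mul (c : 𝔽) (F G : SkewPoly 𝔽 n) : S.mul (c • F) G = c • S.mul F G := by
  rw [← S.const_mul, S.mul_assoc, S.const_mul]

theorem C_mul_C (a b : 𝔽) : S.mul (C n a) (C n b) = C n (a * b) := by
  rw [S.const_mul, C, C, Finsupp.smul_single, smul_eq_mul]

theorem mul_X (F : SkewPoly 𝔽 n) (i : Fin n) :
    S.mul F (X 𝔽 i) = Finsupp.mapDomain (· * FreeMonoid.of i) F := by
  induction F using Finsupp.induction with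
  | zero => rw [S.zero_mul, Finsupp.mapDomain_zero]
  | single_add m c F _ _ ih =>
    rw [S.add_mul, Finsupp.mapDomain_add, ih, Finsupp.mapDomain_single, ← Finsupp.smul_single_one,
      S.smul_mul, X, S.mono_mul_mono, Finsupp.smul_single_one]

theorem mul_X_apply_mul_of (F : SkewPoly 𝔽 n) (i j : Fin n) (m : FreeMonoid (Fin n)) :
    S.mul F (X 𝔽 i) (m * FreeMonoid.of j) = if j = i then F m else 0 := by
  rw [S.mul_X]
  split_ifs with hji
  · subst hji
    exact Finsupp.mapDomain_apply (fun _ _ h => mul_right_cancel h) F m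
  · refine Finsupp.mapDomain_of_notMem_range _ _ ?_
    rintro ⟨m', hm'⟩
    exact hji (by simpa using congrArg FreeMonoid.toList hm' : m' = m ∧ i = j).2.symm

theorem mul_C_apply_eq_zero (F : SkewPoly 𝔽 n) (c : 𝔽) {w : FreeMonoid (Fin n)}
    (hw : deg F < w.length) : S.mul F (C n c) w = 0 := by
  by_cases hF : F = 0
  · rw [hF, S.zero_mul, Finsupp.zero_apply]
  by_cases hc : c = 0
  · rw [hc, C, Finsupp.single_zero, S.mul_zero, Finsupp.zero_apply]
  refine apply_eq_zero_of_deg_lt (lt_of_le_of_lt ?_ hw)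
  rw [S.deg_mul F (C n c) hF (Finsupp.single_ne_zero.2 hc)]
  simpa using add_le_add_right (deg_C_le (n := n) c) (deg F)

end RawMul

section Decomposes

variable (S : RawMul 𝔽 n) (a : Fin n → 𝔽)

theorem decomposes_C (b : 𝔽) : Decomposes S a (C n b) b :=
  ⟨0, by simp [S.zero_mul]⟩

theorem decomposes_zero : Decomposes S a 0 0 :=
  ⟨0, by simp [S.zero_mul, C]⟩

theorem decomposes_sum_mul_X_sub_C (G : Fin n → SkewPoly 𝔽 n) :
    Decomposes S a (∑ i, S.mul (G i) (X 𝔽 i - C n (a i))) 0 :=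
  ⟨G, by simp [C]⟩

theorem decomposes_X (i : Fin n) : Decomposes S a (X 𝔽 i) (a i) := by
  refine ⟨Pi.single i (C n 1), ?_⟩
  rw [Finset.sum_eq_single i (fun j _ hji => by rw [Pi.single_eq_of_ne hji, S.zero_mul])
    (by simp), Pi.single_eq_same, S.one_mul, sub_add_cancel]

variable {S a}

theorem Decomposes.add {F F' : SkewPoly 𝔽 n} {b b' : 𝔽} (h : Decomposes S a F b)
    (h' : Decomposes S a F' b') : Decomposes S a (F + F') (b + b') := by
  obtain ⟨G, rfl⟩ := h
  obtain ⟨G', rfl⟩ := h'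
  refine ⟨G + G', ?_⟩
  simp only [Pi.add_apply, S.add_mul, Finset.sum_add_distrib, C, Finsupp.single_add]
  abel

theorem Decomposes.neg {F : SkewPoly 𝔽 n} {b : 𝔽} (h : Decomposes S a F b) :
    Decomposes S a (-F) (-b) := by
  obtain ⟨G, rfl⟩ := h
  refine ⟨-G, ?_⟩
  simp only [Pi.neg_apply, S.neg_mul, Finset.sum_neg_distrib, C, Finsupp.single_neg, neg_add]

theorem Decomposes.sub {F F' : SkewPoly 𝔽 n} {b b' : 𝔽} (h : Decomposes S a F b)
    (h' : Decomposes S a F' b') : Decomposes S a (F - F') (b - b') := by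
  simpa only [sub_eq_add_neg] using h.add h'.neg

theorem Decomposes.smul {F : SkewPoly 𝔽 n} {b : 𝔽} (c : 𝔽) (h : Decomposes S a F b) :
    Decomposes S a (c • F) (c * b) := by
  obtain ⟨G, rfl⟩ := h
  refine ⟨fun i => S.mul (C n c) (G i), ?_⟩
  simp only [← S.const_mul c, S.mul_add, S.mul_sum, S.mul_assoc, S.C_mul_C]

theorem Decomposes.sum {ι : Type*} (s : Finset ι) {F : ι → SkewPoly 𝔽 n} {b : ι → 𝔽}
    (h : ∀ i ∈ s, Decomposes S a (F i) (b i)) :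
    Decomposes S a (∑ i ∈ s, F i) (∑ i ∈ s, b i) := by
  classical
  induction s using Finset.induction with
  | empty => simpa using decomposes_zero S a
  | insert i s hi ih =>
    rw [Finset.sum_insert hi, Finset.sum_insert hi]
    exact (h i (s.mem_insert_self i)).add (ih fun j hj => h j (Finset.mem_insert_of_mem hj))

/-- Compare the coefficients of `m₀ xᵢ₀`, where `m₀` is a longest word occurring in the
`Gᵢ`: only `Gᵢ₀ xᵢ₀` contributes, since the `Gᵢ aᵢ` have smaller degree. -/
theorem eq_zero_of_decomposes_zero {b : 𝔽} (h : Decomposes S a 0 b) : b = 0 := by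
  obtain ⟨G, hG⟩ := h
  by_cases hG0 : ∀ i, G i = 0
  · simpa [hG0, S.zero_mul, C] using (congrArg (· 1) hG).symm
  push Not at hG0
  obtain ⟨i₁, hi₁⟩ := hG0
  obtain ⟨m₁, hm₁⟩ := Finsupp.support_nonempty_iff.2 hi₁
  obtain ⟨⟨i₀, m₀⟩, hmem₀, hmax⟩ := (Finset.univ.sigma fun i => (G i).support).exists_max_image
    (fun p => p.2.length) ⟨⟨i₁, m₁⟩, Finset.mem_sigma.2 ⟨Finset.mem_univ _, hm₁⟩⟩
  have hdeg (i : Fin n) : deg (G i) < (m₀ * FreeMonoid.of i₀).length := by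
    refine lt_of_le_of_lt (b := (m₀.length : WithBot ℕ)) (Finset.sup_le fun m hm => ?_) ?_
    · exact WithBot.coe_le_coe.2 (hmax ⟨i, m⟩ (Finset.mem_sigma.2 ⟨Finset.mem_univ _, hm⟩))
    · exact WithBot.coe_lt_coe.2 (by simp)
  have hC : C n b (m₀ * FreeMonoid.of i₀) = 0 :=
    apply_eq_zero_of_deg_lt ((deg_C_le b).trans_lt (WithBot.coe_lt_coe.2 (by simp)))
  have hcoeff := congrArg (· (m₀ * FreeMonoid.of i₀)) hG
  simp only [Finsupp.coe_add, Finsupp.coe_finsetSum, Pi.add_apply, Finset.sum_apply, S.mul_sub,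
    Finsupp.sub_apply, S.mul_X_apply_mul_of, fun i c => S.mul_C_apply_eq_zero (G i) c (hdeg i),
    sub_zero, Finset.sum_ite_eq, Finset.mem_univ, if_true, Finsupp.zero_apply, hC,
    add_zero] at hcoeff
  exact absurd hcoeff.symm (Finsupp.mem_support_iff.1 (Finset.mem_sigma.1 hmem₀).2)

theorem Decomposes.unique {F : SkewPoly 𝔽 n} {b b' : 𝔽} (h : Decomposes S a F b)
    (h' : Decomposes S a F b') : b = b' :=
  sub_eq_zero.1 (eq_zero_of_decomposes_zero (by simpa using h.sub h'))

variable {σ : 𝔽 → Matrix (Fin n) (Fin n) 𝔽} {δ : 𝔽 → Fin n → 𝔽}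

theorem exists_decomposes_single_one (hS : HasCommRule S σ δ) (m : FreeMonoid (Fin n)) :
    ∃ b, Decomposes S a (Finsupp.single m 1) b := by
  induction m using FreeMonoid.recOn with
  | one => exact ⟨1, decomposes_C S a 1⟩
  | of_mul i m ih =>
    obtain ⟨b, G, hG⟩ := ih
    have hXC : Decomposes S a (S.mul (X 𝔽 i) (C n b)) (∑ j, σ b i j * a j + δ b i) := by
      rw [hS]
      refine .add (.sum _ fun j _ => ?_) (decomposes_C S a _)
      rw [← Finsupp.smul_single_one]
      exact (decomposes_X S a j).smul _
    rw [← S.mono_mul_mono, ← X, hG, S.mul_add, S.mul_sum]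
    simp only [← S.mul_assoc]
    exact ⟨_, (decomposes_sum_mul_X_sub_C S a _).add hXC⟩

theorem exists_decomposes (hS : HasCommRule S σ δ) (F : SkewPoly 𝔽 n) :
    ∃ b, Decomposes S a F b := by
  induction F using Finsupp.induction with
  | zero => exact ⟨0, decomposes_zero S a⟩
  | single_add m c F _ _ ih =>
    obtain ⟨b, hb⟩ := exists_decomposes_single_one (a := a) hS m
    obtain ⟨b', hb'⟩ := ih
    rw [← Finsupp.smul_single_one]
    exact ⟨_, (hb.smul c).add hb'⟩

end Decomposes

section Eval

variable {S : RawMul 𝔽 n} {a : Fin n → 𝔽}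

theorem eval_eq_of_decomposes {F : SkewPoly 𝔽 n} {b : 𝔽} (h : Decomposes S a F b) :
    eval S a F = b := by
  have hex : ∃ b, Decomposes S a F b := ⟨b, h⟩
  rw [eval, dif_pos hex]
  exact hex.choose_spec.unique h

variable {σ : 𝔽 → Matrix (Fin n) (Fin n) 𝔽} {δ : 𝔽 → Fin n → 𝔽}

theorem decomposes_eval (hS : HasCommRule S σ δ) (F : SkewPoly 𝔽 n) :
    Decomposes S a F (eval S a F) := by
  obtain ⟨b, hb⟩ := exists_decomposes (a := a) hS F
  rwa [eval_eq_of_decomposes hb]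

theorem eval_add (hS : HasCommRule S σ δ) (F F' : SkewPoly 𝔽 n) :
    eval S a (F + F') = eval S a F + eval S a F' :=
  eval_eq_of_decomposes ((decomposes_eval hS F).add (decomposes_eval hS F'))

theorem eval_sub (hS : HasCommRule S σ δ) (F F' : SkewPoly 𝔽 n) :
    eval S a (F - F') = eval S a F - eval S a F' :=
  eval_eq_of_decomposes ((decomposes_eval hS F).sub (decomposes_eval hS F'))

theorem eval_smul (hS : HasCommRule S σ δ) (c : 𝔽) (F : SkewPoly 𝔽 n) :
    eval S a (c • F) = c * eval S a F :=
  eval_eq_of_decomposes ((decomposes_eval hS F).smul c)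

noncomputable def evalOn (hS : HasCommRule S σ δ) (B : Set (Fin n → 𝔽)) :
    SkewPoly 𝔽 n →ₗ[𝔽] (B → 𝔽) where
  toFun F b := eval S b F
  map_add' F F' := funext fun _ => eval_add hS F F'
  map_smul' c F := funext fun _ => eval_smul hS c F

end Eval

section Closure

variable {S : RawMul 𝔽 n} {σ : 𝔽 → Matrix (Fin n) (Fin n) 𝔽} {δ : 𝔽 → Fin n → 𝔽}
  {A B : Set (Fin n → 𝔽)} {a b : Fin n → 𝔽}

theorem subset_pClosure (A : Set (Fin n → 𝔽)) : A ⊆ pClosure S A :=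
  fun _ ha _ hF => hF _ ha

theorem pClosure_mono (h : A ⊆ B) : pClosure S A ⊆ pClosure S B :=
  fun _ hx F hF => hx F fun c hc => hF c (h hc)

theorem exists_eval_eq_one_of_notMem_pClosure (hS : HasCommRule S σ δ) (ha : a ∉ pClosure S B) :
    ∃ F ∈ zeroIdeal S B, eval S a F = 1 := by
  simp only [pClosure, Set.mem_ofPred_eq, not_forall] at ha
  obtain ⟨F, hF, hFa⟩ := ha
  refine ⟨(eval S a F)⁻¹ • F, fun c hc => ?_, ?_⟩
  · rw [eval_smul hS, hF c hc, mul_zero]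
  · rw [eval_smul hS, inv_mul_cancel₀ hFa]

theorem pClosure_exchange (hS : HasCommRule S σ δ) (hab : a ∈ pClosure S (insert b B))
    (ha : a ∉ pClosure S B) : b ∈ pClosure S (insert a B) := by
  intro F hF
  obtain ⟨F₁, hF₁B, hF₁a⟩ := exists_eval_eq_one_of_notMem_pClosure hS ha
  by_contra hFb
  set H := F₁ - (eval S b F₁ * (eval S b F)⁻¹) • F
  have hH : H ∈ zeroIdeal S (insert b B) := by
    rintro c (rfl | hc)
    · rw [eval_sub hS, eval_smul hS, mul_assoc, inv_mul_cancel₀ hFb, mul_one, sub_self]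
    · rw [eval_sub hS, eval_smul hS, hF₁B c hc, hF c (Set.mem_insert_of_mem _ hc), mul_zero,
        sub_zero]
  have hHa := hab H hH
  rw [eval_sub hS, eval_smul hS, hF₁a, hF a (Set.mem_insert _ _), mul_zero, sub_zero] at hHa
  exact one_ne_zero hHa

theorem PIndep.mono (hB : PIndep S B) (hAB : A ⊆ B) : PIndep S A :=
  fun a ha hcl => hB a (hAB ha) (pClosure_mono (Set.sdiff_subset_sdiff_left hAB) hcl)

theorem PIndep.insert_of_notMem_pClosure (hS : HasCommRule S σ δ) (hA : PIndep S A)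
    (hb : b ∉ pClosure S A) : PIndep S (insert b A) := by
  have hbA : b ∉ A := fun h => hb (subset_pClosure A h)
  rintro a (rfl | haA) hcl
  · rw [Set.insert_sdiff_self_of_notMem hbA] at hcl
    exact hb hcl
  · have hba : b ≠ a := fun h => hbA (h ▸ haA)
    rw [← Set.insert_sdiff_singleton_comm hba] at hcl
    have hb' := pClosure_exchange hS hcl (hA a haA)
    rw [Set.insert_sdiff_singleton, Set.insert_eq_of_mem haA] at hb'
    exact hb hb'

end Closure

section Matroid

variable {S : RawMul 𝔽 n} {σ : 𝔽 → Matrix (Fin n) (Fin n) 𝔽} {δ : 𝔽 → Fin n → 𝔽}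
  {A B Ω : Set (Fin n → 𝔽)}

theorem ker_evalOn_le_ker_evalOn (hS : HasCommRule S σ δ) (h : B ⊆ pClosure S A) :
    ker (evalOn hS A) ≤ ker (evalOn hS B) := by
  intro F hF
  have hFA : F ∈ zeroIdeal S A := fun a ha => congrFun hF ⟨a, ha⟩
  exact funext fun b => h b.2 F hFA

/-- Each point `b` of a P-independent `B` has a Lagrange polynomial: one vanishing on
`B \ {b}` and taking the value `1` at `b`. -/
theorem PIndep.range_evalOn_eq_top (hS : HasCommRule S σ δ) (hB : PIndep S B) (hfin : B.Finite) :
    range (evalOn hS B) = ⊤ := by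
  classical
  have := hfin.to_subtype
  rw [eq_top_iff, ← (Pi.basisFun 𝔽 B).span_eq, Submodule.span_le]
  rintro _ ⟨b, rfl⟩
  obtain ⟨F, hF, hFb⟩ := exists_eval_eq_one_of_notMem_pClosure hS (hB b b.2)
  refine ⟨F, funext fun c => ?_⟩
  rw [Pi.basisFun_apply, Pi.single_apply]
  split_ifs with hcb
  · exact hcb ▸ hFb
  · exact hF c ⟨c.2, fun h => hcb (Subtype.ext h)⟩

theorem PIndep.ncard_le_of_subset_pClosure (hS : HasCommRule S σ δ) (hB : PIndep S B)
    (hA : A.Finite) (hBfin : B.Finite) (h : B ⊆ pClosure S A) : B.ncard ≤ A.ncard := by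
  have := hA.fintype
  have := hBfin.fintype
  have hrank := finrank_le_finrank_of_ker_le_ker (evalOn hS A) (evalOn hS B)
    (hB.range_evalOn_eq_top hS hBfin) (ker_evalOn_le_ker_evalOn hS h)
  simp only [Module.finrank_fintype_fun_eq_card, ← Nat.card_eq_fintype_card,
    Nat.card_coe_set_eq] at hrank
  exact hrank

theorem PIndep.encard_le_of_subset_pClosure (hS : HasCommRule S σ δ) (hB : PIndep S B)
    (hA : A.Finite) (h : B ⊆ pClosure S A) : B.encard ≤ A.encard := by
  by_contra! hlt
  obtain ⟨B', hB'B, hB'⟩ := Set.exists_subset_encard_eq (Order.add_one_le_of_lt hlt)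
  have hB'fin : B'.Finite := Set.encard_ne_top_iff.1 (by simp [hB', hA.encard_lt_top.ne])
  have hcard := (hB.mono hB'B).ncard_le_of_subset_pClosure hS hA hB'fin (hB'B.trans h)
  have hcast := hB'fin.cast_ncard_eq
  rw [hB', ← hA.cast_ncard_eq] at hcast
  norm_cast at hcast
  omega

theorem PIndep.exists_insert_of_ncard_lt (hS : HasCommRule S σ δ) (hA : PIndep S A)
    (hAfin : A.Finite) (hB : PIndep S B) (hlt : A.ncard < B.ncard) :
    ∃ b ∈ B \ A, PIndep S (insert b A) := by
  by_contra! hno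
  have hBA : B ⊆ pClosure S A := fun b hb => by
    by_cases hbA : b ∈ A
    · exact subset_pClosure A hbA
    · by_contra hbcl
      exact hno b ⟨hb, hbA⟩ (hA.insert_of_notMem_pClosure hS hbcl)
  exact hlt.not_ge (ENat.toNat_le_toNat (hB.encard_le_of_subset_pClosure hS hAfin hBA)
    hAfin.encard_lt_top.ne)

theorem pIndep_maximal_iff_isPBasis (hS : HasCommRule S σ δ) (hΩ : IsPClosed S Ω)
    (hBΩ : B ⊆ Ω) :
    (PIndep S B ∧ ∀ B' : Set (Fin n → 𝔽), B ⊆ B' → B' ⊆ Ω → PIndep S B' → B' = B) ↔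
      IsPBasis S B Ω := by
  constructor
  · rintro ⟨hB, hmax⟩
    refine ⟨hBΩ, hB, ((pClosure_mono hBΩ).trans_eq hΩ).antisymm fun x hxΩ => ?_⟩
    by_contra hx
    have hxB := hmax _ (Set.subset_insert x B) (Set.insert_subset hxΩ hBΩ)
      (hB.insert_of_notMem_pClosure hS hx)
    exact hx (subset_pClosure B (hxB ▸ Set.mem_insert x B))
  · rintro ⟨-, hB, hcl⟩
    refine ⟨hB, fun B' hBB' hB'Ω hB' => (hBB'.antisymm fun b hb => ?_).symm⟩
    by_contra hbB
    exact hB' b hb (pClosure_mono (Set.subset_sdiff_singleton hBB' hbB) (hcl ▸ hB'Ω hb))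

end Matroid

end SkewPoly

theorem stmt9_general {𝔽 : Type*} [DivisionRing 𝔽] {n : ℕ}
    (σ : 𝔽 → Matrix (Fin n) (Fin n) 𝔽) (δ : 𝔽 → Fin n → 𝔽)
    (S : RawMul 𝔽 n) (hS : HasCommRule S σ δ)
    (Ω : Set (Fin n → 𝔽)) (hΩ : IsPClosed S Ω) (hfg : FinGen S Ω) :
    PIndep S (∅ : Set (Fin n → 𝔽)) ∧
    (∀ A A' : Set (Fin n → 𝔽), A ⊆ A' → A' ⊆ Ω → PIndep S A' → PIndep S A) ∧
    (∀ A A' : Set (Fin n → 𝔽), A ⊆ Ω → A' ⊆ Ω → PIndep S A → PIndep S A' →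
      A.ncard < A'.ncard → ∃ b ∈ A' \ A, PIndep S (insert b A)) ∧
    (∀ B : Set (Fin n → 𝔽), B ⊆ Ω →
      ((PIndep S B ∧
          ∀ B' : Set (Fin n → 𝔽), B ⊆ B' → B' ⊆ Ω → PIndep S B' → B' = B) ↔
        IsPBasis S B Ω)) := by
  obtain ⟨G, hG, -, hGΩ⟩ := hfg
  have hfin (A : Set (Fin n → 𝔽)) (hAΩ : A ⊆ Ω) (hA : PIndep S A) : A.Finite :=
    Set.encard_lt_top_iff.1 <|
      (hA.encard_le_of_subset_pClosure hS hG (hGΩ ▸ hAΩ)).trans_lt hG.encard_lt_top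
  exact ⟨fun _ h => h.elim, fun A A' hAA' _ hA' => hA'.mono hAA',
    fun A A' hAΩ _ hA hA' hlt => hA.exists_insert_of_ncard_lt hS (hfin A hAΩ hA) hA' hlt,
    fun B hBΩ => pIndep_maximal_iff_isPBasis hS hΩ hBΩ⟩

/-- The P-independent subsets of a finitely generated P-closed set `Ω`
form a matroid (empty set independent, closed under subsets, augmentation), and its
bases (maximal independent sets) are exactly the P-bases of `Ω`. -/
theorem stmt9 {𝔽 : Type*} [DivisionRing 𝔽] {n : ℕ} (hn : 0 < n)
    (σ : 𝔽 → Matrix (Fin n) (Fin n) 𝔽) (δ : 𝔽 → Fin n → 𝔽)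
    (hσ : IsMatrixMorphism σ) (hδ : IsVectorDerivation σ δ)
    (S : RawMul 𝔽 n) (hS : HasCommRule S σ δ)
    (Ω : Set (Fin n → 𝔽)) (hΩ : IsPClosed S Ω) (hfg : FinGen S Ω) :
    PIndep S (∅ : Set (Fin n → 𝔽)) ∧
    (∀ A A' : Set (Fin n → 𝔽), A ⊆ A' → A' ⊆ Ω → PIndep S A' → PIndep S A) ∧
    (∀ A A' : Set (Fin n → 𝔽), A ⊆ Ω → A' ⊆ Ω → PIndep S A → PIndep S A' →
      A.ncard < A'.ncard → ∃ b ∈ A' \ A, PIndep S (insert b A)) ∧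
    (∀ B : Set (Fin n → 𝔽), B ⊆ Ω →
      ((PIndep S B ∧
          ∀ B' : Set (Fin n → 𝔽), B ⊆ B' → B' ⊆ Ω → PIndep S B' → B' = B) ↔
        IsPBasis S B Ω)) :=
  stmt9_general σ δ S hS Ω hΩ hfg
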